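/- arXiv:2509.26630 — 4 statements merged into one kernel-verified Lean document; each statement's English description precedes it below -/
import Mathlib

section
/- For any finite collection of finite sets 𝒫 ⊆ Finset ℕ, there exist disjoint subfamilies 𝒳 and 𝒴 with 𝒳 ∪ 𝒴 = 𝒫 such that |⋃_{A∈𝒳} A| ≤ |𝒳| and there is an injective function f : 𝒴 → ℕ with f(A) ∈ A \ (⋃_{B∈𝒳} B) for all A ∈ 𝒴. -/
/-! Choose `X ⊆ P` of maximum size among the subfamilies covering at most `|X|` points. By
maximality, every nonempty `S ⊆ P \ X` covers more than `|S|` points outside `⋃ X`: otherwise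
`X ∪ S` would be a larger such subfamily. This is Hall's condition for the sets `A \ ⋃ X`,
`A ∈ P \ X`, so they have a system of distinct representatives. -/

open Finset

theorem Finset.exists_injOn_mem_of_forall_card_le_card_biUnion {ι α : Type*} [DecidableEq α]
    [Nonempty α] (Y : Finset ι) (t : ι → Finset α)
    (hall : ∀ S ⊆ Y, #S ≤ #(S.biUnion t)) :
    ∃ f : ι → α, Set.InjOn f Y ∧ ∀ i ∈ Y, f i ∈ t i := by
  classical
  obtain ⟨g, hg, hgt⟩ := (all_card_le_biUnion_card_iff_exists_injective fun i : Y ↦ t i).mp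
    fun s ↦ by
      have := hall (s.map (.subtype _)) fun _ hi ↦ by
        obtain ⟨j, -, rfl⟩ := mem_map.mp hi; exact j.2
      rwa [card_map, map_eq_image, image_biUnion] at this
  refine ⟨fun i ↦ if h : i ∈ Y then g ⟨i, h⟩ else Classical.arbitrary α, ?_, fun i hi ↦ ?_⟩
  · intro i hi j hj hij
    simpa [dif_pos (mem_coe.mp hi), dif_pos (mem_coe.mp hj), hg.eq_iff] using hij
  · simpa [dif_pos hi] using hgt ⟨i, hi⟩

variable {α : Type*} [DecidableEq α]

theorem Finset.card_biUnion_union_le (X S : Finset (Finset α)) :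
    #((X ∪ S).biUnion id) ≤ #(X.biUnion id) + #(S.biUnion id \ X.biUnion id) := by
  rw [union_biUnion, ← union_sdiff_self_eq_union]
  exact card_union_le _ _

theorem Finset.biUnion_id_sdiff (S : Finset (Finset α)) (u : Finset α) :
    S.biUnion id \ u = S.biUnion (· \ u) := by
  ext
  simp only [mem_biUnion, mem_sdiff, id]
  grind

theorem Finset.card_le_card_biUnion_sdiff_of_isMax {P X : Finset (Finset α)} (hXP : X ⊆ P)
    (hX : #(X.biUnion id) ≤ #X) (hmax : ∀ X' ⊆ P, #(X'.biUnion id) ≤ #X' → #X' ≤ #X)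
    {S : Finset (Finset α)} (hS : S ⊆ P \ X) : #S ≤ #(S.biUnion fun A ↦ A \ X.biUnion id) := by
  rw [← biUnion_id_sdiff]
  by_contra! hlt
  have hXS : Disjoint X S := disjoint_of_subset_right hS disjoint_sdiff
  have hXS_le : #((X ∪ S).biUnion id) ≤ #(X ∪ S) := by
    rw [card_union_of_disjoint hXS]
    have := card_biUnion_union_le X S
    omega
  have := hmax (X ∪ S) (union_subset hXP (hS.trans sdiff_subset)) hXS_le
  rw [card_union_of_disjoint hXS] at this
  omega

theorem stmt_0 (P : Finset (Finset ℕ)) :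
    ∃ X Y : Finset (Finset ℕ), Disjoint X Y ∧ X ∪ Y = P ∧
      (X.biUnion id).card ≤ X.card ∧
      ∃ f : Finset ℕ → ℕ, Set.InjOn f Y ∧
        ∀ A ∈ Y, f A ∈ A \ X.biUnion id := by
  obtain ⟨X, hX, hmax⟩ := exists_max_image {X ∈ P.powerset | #(X.biUnion id) ≤ #X} card
    ⟨∅, by simp⟩
  rw [mem_filter, mem_powerset] at hX
  obtain ⟨f, hf, hfY⟩ := exists_injOn_mem_of_forall_card_le_card_biUnion (P \ X) _
    fun S hS ↦ card_le_card_biUnion_sdiff_of_isMax hX.1 hX.2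
      (fun X' hX'P hX' ↦ hmax X' (mem_filter.mpr ⟨mem_powerset.mpr hX'P, hX'⟩)) hS
  exact ⟨X, P \ X, disjoint_sdiff, union_sdiff_of_subset hX.1, hX.2, f, hf, hfY⟩
end

section
/- Let 𝒫 be a finite family of finite subsets of ℕ, let 𝒢 ⊆ ℕ, let 𝒴 = {A ∈ 𝒫 : A ⊄ 𝒢} and 𝒳 = 𝒫 \ 𝒴 (so that A ⊆ 𝒢 for all A ∈ 𝒳), and let f be an injective function from 𝒴 to ℕ with f(B) ∈ B and f(B) ∉ 𝒢 for all B ∈ 𝒴. Define g(A) = (A ∩ 𝒢) ∪ {f(B) : B ∈ 𝒴, B ⊆ A}. Then for all A, A' ∈ 𝒫: g(A) ⊆ g(A') if and only if A ⊆ A'. In particular g is injective and order-preserving in both directions. -/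
theorem stmt_1 (P X Y : Finset (Finset ℕ)) (G : Finset ℕ)
    (hdisj : Disjoint X Y) (hP : X ∪ Y = P)
    (hXG : ∀ A ∈ X, A ⊆ G)
    (f : Finset ℕ → ℕ) (hf : Set.InjOn f Y)
    (hfB : ∀ B ∈ Y, f B ∈ B ∧ f B ∉ G)
    (g : Finset ℕ → Finset ℕ)
    (hg : ∀ A, g A = (A ∩ G) ∪ (Y.filter (fun B => B ⊆ A)).image f) :
    ∀ A ∈ P, ∀ A' ∈ P, (g A ⊆ g A' ↔ A ⊆ A') := by
  intro A hA A' hA'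
  constructor
  · intro hsub
    rcases Finset.mem_union.mp (hP ▸ hA) with hAX | hAY
    · intro x hx
      have hxG : x ∈ G := hXG A hAX hx
      have h1 : x ∈ g A := by
        rw [hg]; exact Finset.mem_union_left _ (Finset.mem_inter.mpr ⟨hx, hxG⟩)
      have h2 := hsub h1
      rw [hg] at h2
      rcases Finset.mem_union.mp h2 with h | h
      · exact (Finset.mem_inter.mp h).1
      · rcases Finset.mem_image.mp h with ⟨B, hB, hfx⟩
        rcases Finset.mem_filter.mp hB with ⟨hBY, _⟩
        exact absurd hxG (hfx ▸ (hfB B hBY).2)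
    · have h1 : f A ∈ g A := by
        rw [hg]
        exact Finset.mem_union_right _
          (Finset.mem_image_of_mem f (Finset.mem_filter.mpr ⟨hAY, le_refl A⟩))
      have h2 := hsub h1
      rw [hg] at h2
      rcases Finset.mem_union.mp h2 with h | h
      · exact absurd (Finset.mem_inter.mp h).2 (hfB A hAY).2
      · rcases Finset.mem_image.mp h with ⟨B, hB, hfx⟩
        rcases Finset.mem_filter.mp hB with ⟨hBY, hBA'⟩
        have hBA : B = A := hf (Finset.mem_coe.mpr hBY) (Finset.mem_coe.mpr hAY) hfx
        exact hBA ▸ hBA'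
  · intro h
    rw [hg, hg]
    apply Finset.union_subset_union
    · exact Finset.inter_subset_inter h le_rfl
    · apply Finset.image_subset_image
      intro B hB
      rcases Finset.mem_filter.mp hB with ⟨h1, h2⟩
      exact Finset.mem_filter.mpr ⟨h1, h2.trans h⟩
end

section
/- Let 𝒫 be a finite family of finite subsets of ℕ, and let 𝒳 ⊆ 𝒫 be of maximum size among subfamilies satisfying |⋃_{A∈𝒳} A| < |𝒳| (taking 𝒳 = ∅ if no such subfamily exists). Let 𝒢 = ⋃_{A∈𝒳} A and 𝒴 = 𝒫 \ 𝒳. Then for every nonempty 𝒮 ⊆ 𝒴, |(⋃_{A∈𝒮} A) \ 𝒢| ≥ |𝒮|. -/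
/-!
If some nonempty `S ⊆ P \ X` had fewer than `|S|` new elements outside `G = ⋃ X`, then
`X ∪ S` would be a strictly larger subfamily of `P` whose union is still smaller than itself,
contradicting the maximality of `X`.
-/

open Finset

lemma card_biUnion_union_lt_card {α : Type*} [DecidableEq α] {X S : Finset (Finset α)}
    (hXS : Disjoint X S) (hX : #(X.biUnion id) ≤ #X)
    (hS : #(S.biUnion id \ X.biUnion id) < #S) :
    #((X ∪ S).biUnion id) < #(X ∪ S) := by
  calc #((X ∪ S).biUnion id)
      = #(S.biUnion id \ X.biUnion id) + #(X.biUnion id) := by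
        rw [card_sdiff_add_card, union_biUnion, union_comm]
    _ < #S + #X := by omega
    _ = #(X ∪ S) := by rw [card_union_of_disjoint hXS, add_comm]

theorem stmt_7 (P X : Finset (Finset ℕ)) (hXP : X ⊆ P)
    (hX : X = ∅ ∨ (X.biUnion id).card < X.card)
    (hmax : ∀ Z ⊆ P, (Z.biUnion id).card < Z.card → Z.card ≤ X.card) :
    ∀ S ⊆ P \ X, S.Nonempty →
      S.card ≤ ((S.biUnion id) \ (X.biUnion id)).card := by
  intro S hS hSne
  by_contra! hlt
  have hXS : Disjoint X S := disjoint_right.mpr fun _ ha => (mem_sdiff.mp (hS ha)).2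
  have hXle : #(X.biUnion id) ≤ #X := by
    rcases hX with rfl | h
    · simp
    · exact h.le
  have hle := hmax (X ∪ S) (union_subset hXP (hS.trans sdiff_subset))
    (card_biUnion_union_lt_card hXS hXle hlt)
  rw [card_union_of_disjoint hXS] at hle
  exact hSne.card_pos.ne' (by omega)
end

section
/- Let 𝒳 and 𝒴 be disjoint finite families of finite subsets of ℕ with 𝒢 = ⋃_{A∈𝒳} A, and suppose 𝒳 is of maximum size among all subfamilies 𝒵 ⊆ 𝒳 ∪ 𝒴 with |⋃_{A∈𝒵} A| < |𝒵|. If 𝒮 ⊆ 𝒴 is nonempty and |𝒢' ∩ ⋃_{A∈𝒮} A| < |𝒮| where 𝒢' = (⋃_{A∈𝒳∪𝒴} A) \ 𝒢, then |⋃_{A∈𝒮∪𝒳} A| < |𝒮 ∪ 𝒳|, contradicting maximality; hence no such 𝒮 exists. -/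
/-! Adjoining `S` to `X` adds exactly the points of `G' ∩ ⋃ S` to the union, so if `S` were
deficient, `S ∪ X` would be a deficient family strictly larger than `X`. -/

open Finset

lemma card_biUnion_union_eq_add_card_inter_sdiff {α : Type*} [DecidableEq α]
    {X Y S : Finset (Finset α)} (hS : S ⊆ Y) :
    #((S ∪ X).biUnion id) =
      #(X.biUnion id) + #((((X ∪ Y).biUnion id) \ X.biUnion id) ∩ S.biUnion id) := by
  have hSU : S.biUnion id ⊆ (X ∪ Y).biUnion id :=
    biUnion_subset_biUnion_of_subset_left _ (hS.trans subset_union_right)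
  have hnew : ((X ∪ Y).biUnion id \ X.biUnion id) ∩ S.biUnion id =
      S.biUnion id \ X.biUnion id := by
    rw [sdiff_inter_right_comm, inter_eq_right.mpr hSU]
  rw [hnew, union_biUnion, add_comm, card_sdiff_add_card]

theorem stmt_14 (X Y : Finset (Finset ℕ)) (hdisj : Disjoint X Y)
    (G : Finset ℕ) (hG : G = X.biUnion id)
    (hX : X = ∅ ∨ (X.biUnion id).card < X.card)
    (hmax : ∀ Z ⊆ X ∪ Y, (Z.biUnion id).card < Z.card → Z.card ≤ X.card) :
    ∀ S ⊆ Y, S.Nonempty →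
      S.card ≤ (((((X ∪ Y).biUnion id) \ G)) ∩ S.biUnion id).card := by
  intro S hS hSne
  by_contra! hdeficient
  subst hG
  have hcard : #(S ∪ X) = #S + #X := card_union_of_disjoint (hdisj.symm.mono_left hS)
  have hGX : #(X.biUnion id) ≤ #X := by
    rcases hX with rfl | hlt
    · simp
    · exact hlt.le
  have hSX_deficient : #((S ∪ X).biUnion id) < #(S ∪ X) := by
    rw [card_biUnion_union_eq_add_card_inter_sdiff hS, hcard]
    omega
  have hle := hmax _ (union_subset (hS.trans subset_union_right) subset_union_left) hSX_deficient
  have hSpos := hSne.card_pos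
  omega
end
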